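/- Let (V,E) be a finite graph and let 0 < ε < 1/2. If X ⊆ V is nonempty and ε-good in (V,E), then X is (3ε, ε)-excellent in (V,E). -/
import Mathlib


open Finset

/-- `X` is `ε`-good in `(V,E)`: every vertex has either few or almost all of `X` as
neighbors. -/
def IsGood {V : Type} [Fintype V] (E : V → V → Prop) [DecidableRel E]
    (ε : ℝ) (X : Finset V) : Prop :=
  ∀ b : V, ((X.filter fun a => E a b).card : ℝ) < ε * (X.card : ℝ) ∨
           ((X.filter fun a => E a b).card : ℝ) > (1 - ε) * (X.card : ℝ)

/-- `X` is `(ε,δ)`-excellent in `(V,E)`: `X` is `ε`-good and, for every nonempty `δ`-good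
set `Y`, the set of vertices of `X` with few edges to `Y` is either a small or large
fraction of `X`. -/
def IsExcellent {V : Type} [Fintype V] (E : V → V → Prop) [DecidableRel E]
    (ε δ : ℝ) (X : Finset V) : Prop :=
  IsGood E ε X ∧
    ∀ Y : Finset V, Y.Nonempty → IsGood E δ Y →
      (((X.filter fun a => ((Y.filter fun b => E a b).card : ℝ) < δ * (Y.card : ℝ)).card : ℝ)
          < ε * (X.card : ℝ)) ∨
      (((X.filter fun a => ((Y.filter fun b => E a b).card : ℝ) < δ * (Y.card : ℝ)).card : ℝ)
          > (1 - ε) * (X.card : ℝ))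

private lemma double_count {V : Type} (E : V → V → Prop) [DecidableRel E]
    (A B : Finset V) :
    ∑ a ∈ A, ((B.filter fun b => E a b).card : ℝ)
      = ∑ b ∈ B, ((A.filter fun a => E a b).card : ℝ) := by
  have h : ∑ a ∈ A, (B.filter fun b => E a b).card
      = ∑ b ∈ B, (A.filter fun a => E a b).card := by
    simp_rw [card_filter]
    exact Finset.sum_comm
  exact_mod_cast h

/-- An `ε`-good set is `(3ε, ε)`-excellent, for any `0 < ε < 1/2`. -/
theorem good_implies_three_eps_excellent {V : Type} [Fintype V] (E : V → V → Prop) [DecidableRel E]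
    (hsymm : ∀ a b : V, E a b → E b a)
    (ε : ℝ) (hε0 : 0 < ε) (hε : ε < 1 / 2)
    (X : Finset V) (hX : X.Nonempty) (hXgood : IsGood E ε X) :
    IsExcellent E (3 * ε) ε X := by
  have hXpos : (0:ℝ) < X.card := by exact_mod_cast card_pos.mpr hX
  refine ⟨?_, ?_⟩
  · intro b
    rcases hXgood b with h | h
    · left; nlinarith
    · right; nlinarith
  · intro Y hYne hYgood
    classical
    have hYpos : (0:ℝ) < Y.card := by exact_mod_cast card_pos.mpr hYne
    by_contra hcon
    push_neg at hcon
    obtain ⟨h1, h2⟩ := hcon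
    set X₀ := X.filter (fun a => ((Y.filter fun b => E a b).card : ℝ) < ε * (Y.card : ℝ))
      with hX₀def
    have hX₀sub : X₀ ⊆ X := filter_subset _ _
    have hX₀le : (X₀.card : ℝ) ≤ X.card := by exact_mod_cast card_le_card hX₀sub
    have hX₀pos : (0:ℝ) < X₀.card := lt_of_lt_of_le (by positivity) h1
    have hX₀ne : X₀.Nonempty := card_pos.mp (by exact_mod_cast hX₀pos)
    have hε6 : 6 * ε ≤ 1 := by nlinarith
    set Y₀ := Y.filter (fun b => ((X.filter fun a => E a b).card : ℝ) < ε * (X.card : ℝ))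
      with hY₀def
    set Y₁ := Y \ Y₀ with hY₁def
    set X₁ := X \ X₀ with hX₁def
    have hY₀sub : Y₀ ⊆ Y := filter_subset _ _
    have hX₁card : (X₁.card : ℝ) = X.card - X₀.card := by
      rw [hX₁def, card_sdiff_of_subset hX₀sub, Nat.cast_sub (card_le_card hX₀sub)]
    have hY₁card : (Y₁.card : ℝ) = Y.card - Y₀.card := by
      rw [hY₁def, card_sdiff_of_subset hY₀sub, Nat.cast_sub (card_le_card hY₀sub)]
    -- few-edges members of X₀
    have hf1 : ∀ a ∈ X₀, ((Y.filter fun b => E a b).card : ℝ) < ε * Y.card := by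
      intro a ha
      rw [hX₀def, mem_filter] at ha
      exact ha.2
    -- members of X₁ have many edges to Y
    have hf2 : ∀ a ∈ X₁, (1 - ε) * Y.card < ((Y.filter fun b => E a b).card : ℝ) := by
      intro a ha
      rw [hX₁def, mem_sdiff] at ha
      obtain ⟨haX, haX₀⟩ := ha
      have hge : ¬ (((Y.filter fun b => E a b).card : ℝ) < ε * Y.card) := by
        intro h
        exact haX₀ (by rw [hX₀def]; exact mem_filter.mpr ⟨haX, h⟩)
      have hg := hYgood a
      have heq : Y.filter (fun y => E y a) = Y.filter (fun b => E a b) :=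
        filter_congr fun b _ => ⟨fun h => hsymm b a h, fun h => hsymm a b h⟩
      rw [heq] at hg
      rcases hg with h | h
      · exact absurd h hge
      · exact h
    have hf3 : ∀ b ∈ Y₀, ((X.filter fun a => E a b).card : ℝ) < ε * X.card := by
      intro b hb
      rw [hY₀def, mem_filter] at hb
      exact hb.2
    have hf4 : ∀ b ∈ Y₁, (1 - ε) * X.card < ((X.filter fun a => E a b).card : ℝ) := by
      intro b hb
      rw [hY₁def, mem_sdiff] at hb
      obtain ⟨hbY, hbY₀⟩ := hb
      rcases hXgood b with h | h
      · exact absurd (by rw [hY₀def]; exact mem_filter.mpr ⟨hbY, h⟩) hbY₀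
      · exact h
    -- covering bounds
    have hc1 : ∀ b, ((X.filter fun a => E a b).card : ℝ)
        ≤ ((X₀.filter fun a => E a b).card : ℝ) + X₁.card := by
      intro b
      have hsub : X.filter (fun a => E a b) ⊆ (X₀.filter fun a => E a b) ∪ X₁ := by
        intro a ha
        rw [mem_filter] at ha
        by_cases h : a ∈ X₀
        · exact mem_union_left _ (mem_filter.mpr ⟨h, ha.2⟩)
        · exact mem_union_right _ (mem_sdiff.mpr ⟨ha.1, h⟩)
      have h := (card_le_card hsub).trans (card_union_le _ _)
      exact_mod_cast h
    have hc2 : ∀ a, ((Y.filter fun b => E a b).card : ℝ)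
        ≤ ((Y₀.filter fun b => E a b).card : ℝ) + Y₁.card := by
      intro a
      have hsub : Y.filter (fun b => E a b) ⊆ (Y₀.filter fun b => E a b) ∪ Y₁ := by
        intro b hb
        rw [mem_filter] at hb
        by_cases h : b ∈ Y₀
        · exact mem_union_left _ (mem_filter.mpr ⟨h, hb.2⟩)
        · exact mem_union_right _ (mem_sdiff.mpr ⟨hb.1, h⟩)
      have h := (card_le_card hsub).trans (card_union_le _ _)
      exact_mod_cast h
    -- the sum S over Y₁
    have hS_lt : ∑ b ∈ Y₁, ((X₀.filter fun a => E a b).card : ℝ)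
        < (X₀.card : ℝ) * (ε * Y.card) := by
      rw [← double_count]
      calc ∑ a ∈ X₀, ((Y₁.filter fun b => E a b).card : ℝ)
          ≤ ∑ a ∈ X₀, ((Y.filter fun b => E a b).card : ℝ) := by
            refine sum_le_sum fun a _ => ?_
            exact_mod_cast card_le_card (filter_subset_filter _ (sdiff_subset))
        _ < ∑ _a ∈ X₀, ε * (Y.card : ℝ) := by
            exact sum_lt_sum_of_nonempty hX₀ne hf1
        _ = (X₀.card : ℝ) * (ε * Y.card) := by rw [sum_const, nsmul_eq_mul]
    have hS_ge : (Y₁.card : ℝ) * (X₀.card - ε * X.card)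
        ≤ ∑ b ∈ Y₁, ((X₀.filter fun a => E a b).card : ℝ) := by
      have key : ∀ b ∈ Y₁, (X₀.card : ℝ) - ε * X.card
          ≤ ((X₀.filter fun a => E a b).card : ℝ) := by
        intro b hb
        have h4 := hf4 b hb
        have h1b := hc1 b
        linarith [hX₁card]
      calc (Y₁.card : ℝ) * (X₀.card - ε * X.card)
          = ∑ _b ∈ Y₁, ((X₀.card : ℝ) - ε * X.card) := by rw [sum_const, nsmul_eq_mul]
        _ ≤ _ := sum_le_sum key
    -- the sum T over X₁
    have hT_le : ∑ a ∈ X₁, ((Y₀.filter fun b => E a b).card : ℝ)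
        ≤ (Y₀.card : ℝ) * (ε * X.card) := by
      rw [double_count]
      calc ∑ b ∈ Y₀, ((X₁.filter fun a => E a b).card : ℝ)
          ≤ ∑ _b ∈ Y₀, ε * (X.card : ℝ) := by
            refine sum_le_sum fun b hb => ?_
            have hle : ((X₁.filter fun a => E a b).card : ℝ)
                ≤ ((X.filter fun a => E a b).card : ℝ) := by
              exact_mod_cast card_le_card (filter_subset_filter _ (sdiff_subset))
            linarith [hf3 b hb]
        _ = (Y₀.card : ℝ) * (ε * X.card) := by rw [sum_const, nsmul_eq_mul]
    have hT_ge : (X₁.card : ℝ) * (Y₀.card - ε * Y.card)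
        ≤ ∑ a ∈ X₁, ((Y₀.filter fun b => E a b).card : ℝ) := by
      have key : ∀ a ∈ X₁, (Y₀.card : ℝ) - ε * Y.card
          ≤ ((Y₀.filter fun b => E a b).card : ℝ) := by
        intro a ha
        have h2a := hf2 a ha
        have hca := hc2 a
        linarith [hY₁card]
      calc (X₁.card : ℝ) * (Y₀.card - ε * Y.card)
          = ∑ _a ∈ X₁, ((Y₀.card : ℝ) - ε * Y.card) := by rw [sum_const, nsmul_eq_mul]
        _ ≤ _ := sum_le_sum key
    have hIneq1 : (Y₁.card : ℝ) * (X₀.card - ε * X.card) < (X₀.card : ℝ) * (ε * Y.card) :=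
      lt_of_le_of_lt hS_ge hS_lt
    have hIneq2 : (X₁.card : ℝ) * (Y₀.card - ε * Y.card) ≤ (Y₀.card : ℝ) * (ε * X.card) :=
      hT_ge.trans hT_le
    have hA0 : (0:ℝ) ≤ Y₁.card := Nat.cast_nonneg _
    have hA : (Y₁.card : ℝ) < (3/2) * ε * Y.card := by
      nlinarith [hIneq1, hX₀pos, mul_nonneg hA0 (by linarith : (0:ℝ) ≤ (X₀.card : ℝ) - 3 * ε * X.card)]
    have hB : (Y₀.card : ℝ) ≤ (3/2) * ε * Y.card := by
      rcases le_or_gt ((Y₀.card : ℝ)) (ε * Y.card) with h | h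
      · nlinarith
      · have hX₁ge : 3 * ε * X.card ≤ (X₁.card : ℝ) := by rw [hX₁card]; linarith
        nlinarith [hIneq2, mul_le_mul_of_nonneg_right hX₁ge (le_of_lt (sub_pos.mpr h)),
          mul_pos hε0 hXpos]
    have h3 : (Y.card : ℝ) < 3 * ε * Y.card := by linarith [hY₁card]
    have h4 : (0:ℝ) ≤ (1 - 6 * ε) * Y.card :=
      mul_nonneg (by linarith) hYpos.le
    linarith [h3, h4, hYpos]
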